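/- arXiv:1301.7649 — 5 statements merged into one kernel-verified Lean document; each statement's English description precedes it below -/
import Mathlib

section
/- If λ is a positive integer of the form λ = 2·4^s(2ℓ+1) for natural numbers s, ℓ, and λ = m² + n² with natural numbers m, n, then 2^s divides m, 2^s divides n, and both m/2^s and n/2^s are odd. -/
/-!
A square is congruent modulo `4` to its root modulo `2`. Hence a sum of two squares divisible by `4`
has both roots even, which lets us halve `m` and `n` and divide the sum by `4`; after `s` halvings
the sum is `2 (2ℓ + 1) ≡ 2 (mod 4)`, which forces both roots to be odd.
-/

namespace Nat

theorem sq_mod_four (m : ℕ) : m ^ 2 % 4 = m % 2 := by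
  rcases Nat.even_or_odd' m with ⟨k, rfl | rfl⟩
  · rw [show (2 * k) ^ 2 = 4 * k ^ 2 by ring]
    omega
  · rw [show (2 * k + 1) ^ 2 = 4 * (k ^ 2 + k) + 1 by ring]
    omega

theorem even_and_even_of_four_dvd_sq_add_sq {m n : ℕ} (h : 4 ∣ m ^ 2 + n ^ 2) :
    Even m ∧ Even n := by
  have := sq_mod_four m
  have := sq_mod_four n
  simp only [Nat.even_iff]
  omega

theorem odd_and_odd_of_sq_add_sq_mod_four {m n : ℕ} (h : (m ^ 2 + n ^ 2) % 4 = 2) :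
    Odd m ∧ Odd n := by
  have := sq_mod_four m
  have := sq_mod_four n
  simp only [Nat.odd_iff]
  omega

theorem exists_odd_of_sq_add_sq_eq_four_pow_mul {k : ℕ} (hk : k % 4 = 2) (s : ℕ) {m n : ℕ}
    (h : m ^ 2 + n ^ 2 = 4 ^ s * k) :
    ∃ a b, Odd a ∧ Odd b ∧ m = 2 ^ s * a ∧ n = 2 ^ s * b := by
  induction s generalizing m n with
  | zero =>
    rw [pow_zero, one_mul] at h
    obtain ⟨hm, hn⟩ := odd_and_odd_of_sq_add_sq_mod_four (h ▸ hk)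
    exact ⟨m, n, hm, hn, by simp, by simp⟩
  | succ s ih =>
    rw [Nat.pow_succ' (m := 4), mul_assoc] at h
    obtain ⟨⟨a, rfl⟩, ⟨b, rfl⟩⟩ := even_and_even_of_four_dvd_sq_add_sq ⟨_, h⟩
    have hab : a ^ 2 + b ^ 2 = 4 ^ s * k := by linarith
    obtain ⟨c, d, hc, hd, rfl, rfl⟩ := ih hab
    exact ⟨c, d, hc, hd, by ring, by ring⟩

end Nat

theorem stmt1 (m n s ℓ : ℕ) (h : m ^ 2 + n ^ 2 = 2 * 4 ^ s * (2 * ℓ + 1)) :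
    2 ^ s ∣ m ∧ 2 ^ s ∣ n ∧ Odd (m / 2 ^ s) ∧ Odd (n / 2 ^ s) := by
  obtain ⟨a, b, ha, hb, rfl, rfl⟩ :=
    Nat.exists_odd_of_sq_add_sq_eq_four_pow_mul (k := 2 * (2 * ℓ + 1)) (by omega) s
      (h.trans (by ring))
  have hpos : 0 < 2 ^ s := by positivity
  simp only [Nat.mul_div_cancel_left _ hpos]
  exact ⟨dvd_mul_right _ _, dvd_mul_right _ _, ha, hb⟩
end

section
/- Let λ = 4^s(2ℓ+1) with s, ℓ natural numbers and λ ≥ 1. For every pair (m,n) of natural numbers with m² + n² = λ and m + n > 0, one has cos(2^{-s}·mπ) + cos(2^{-s}·nπ) = 0. -/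
open Real

lemma cos_nat_pi (k : ℕ) : Real.cos ((k : ℝ) * π) = (-1) ^ k := by
  simpa using Real.cos_nat_mul_pi_sub 0 k

theorem stmt6 (s ℓ : ℕ) (lam : ℕ) (hlam : lam = 4 ^ s * (2 * ℓ + 1)) (hpos : 1 ≤ lam)
    (m n : ℕ) (h : m ^ 2 + n ^ 2 = lam) (hmn : 0 < m + n) :
    Real.cos ((m : ℝ) / 2 ^ s * π) + Real.cos ((n : ℝ) / 2 ^ s * π) = 0 := by
  subst hlam
  induction s generalizing m n with
  | zero =>
    simp only [pow_zero, one_mul] at h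
    simp only [pow_zero, div_one]
    -- m^2+n^2 odd ⇒ opposite parity
    rcases Nat.even_or_odd m with ⟨a, ha⟩ | ⟨a, ha⟩ <;>
      rcases Nat.even_or_odd n with ⟨b, hb⟩ | ⟨b, hb⟩ <;> subst ha hb
    · exfalso
      have : (a + a) ^ 2 + (b + b) ^ 2 = 4 * (a ^ 2 + b ^ 2) := by ring
      omega
    · have : Real.cos ((↑(a + a) : ℝ) * π) = 1 := by
        rw [cos_nat_pi]; simp [pow_add, ← two_mul]
      have h2 : Real.cos ((↑(2 * b + 1) : ℝ) * π) = -1 := by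
        rw [cos_nat_pi]; simp [pow_succ, pow_mul]
      rw [this, h2]; ring
    · have : Real.cos ((↑(b + b) : ℝ) * π) = 1 := by
        rw [cos_nat_pi]; simp [pow_add, ← two_mul]
      have h2 : Real.cos ((↑(2 * a + 1) : ℝ) * π) = -1 := by
        rw [cos_nat_pi]; simp [pow_succ, pow_mul]
      rw [this, h2]; ring
    · exfalso
      have : (2 * a + 1) ^ 2 + (2 * b + 1) ^ 2 = 4 * (a ^ 2 + a + b ^ 2 + b) + 2 := by ring
      omega
  | succ s ih =>
    -- 4 ∣ m^2 + n^2 ⇒ both even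
    have h4 : m ^ 2 + n ^ 2 = 4 * (4 ^ s * (2 * ℓ + 1)) := by
      rw [h]; ring
    obtain ⟨a, ha⟩ : Even m := by
      rcases Nat.even_or_odd m with hm | ⟨a, ha⟩
      · exact hm
      exfalso
      rcases Nat.even_or_odd n with ⟨b, hb⟩ | ⟨b, hb⟩ <;> subst ha hb
      · have : (2 * a + 1) ^ 2 + (b + b) ^ 2 = 4 * (a ^ 2 + a + b ^ 2) + 1 := by ring
        omega
      · have : (2 * a + 1) ^ 2 + (2 * b + 1) ^ 2 = 4 * (a ^ 2 + a + b ^ 2 + b) + 2 := by ring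
        omega
    obtain ⟨b, hb⟩ : Even n := by
      rcases Nat.even_or_odd n with hn | ⟨b, hb⟩
      · exact hn
      exfalso
      subst ha hb
      have : (a + a) ^ 2 + (2 * b + 1) ^ 2 = 4 * (a ^ 2 + b ^ 2 + b) + 1 := by ring
      omega
    subst ha hb
    have hab : a ^ 2 + b ^ 2 = 4 ^ s * (2 * ℓ + 1) := by
      have : (a + a) ^ 2 + (b + b) ^ 2 = 4 * (a ^ 2 + b ^ 2) := by ring
      omega
    have hpos' : 1 ≤ 4 ^ s * (2 * ℓ + 1) := Nat.one_le_iff_ne_zero.mpr (by positivity)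
    have habpos : 0 < a + b := by nlinarith [hab]
    have key := ih a b habpos hpos' hab
    have e1 : ((a + a : ℕ) : ℝ) / 2 ^ (s + 1) = (a : ℝ) / 2 ^ s := by
      push_cast; rw [pow_succ]; field_simp; ring
    have e2 : ((b + b : ℕ) : ℝ) / 2 ^ (s + 1) = (b : ℝ) / 2 ^ s := by
      push_cast; rw [pow_succ]; field_simp; ring
    rw [e1, e2]; exact key
end

section
/- Let λ = 2·4^s(2ℓ+1) with s, ℓ natural numbers. For every pair (m,n) of natural numbers with m² + n² = λ, one has cos(2^{-s}·mπ) + cos(2^{-s}·nπ) = -2. -/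
open Real

private lemma both_odd (m n k : ℕ) (h : m ^ 2 + n ^ 2 = 4 * k + 2) :
    Odd m ∧ Odd n := by
  rcases Nat.even_or_odd m with ⟨a, ha⟩ | hm
  · exfalso
    rcases Nat.even_or_odd n with ⟨b, hb⟩ | ⟨b, hb⟩
    · subst ha hb
      have key : 4 * (a ^ 2 + b ^ 2) = 4 * k + 2 := by rw [← h]; ring
      generalize a ^ 2 + b ^ 2 = X at key
      omega
    · subst ha hb
      have key : 4 * (a ^ 2 + b ^ 2 + b) + 1 = 4 * k + 2 := by rw [← h]; ring
      generalize a ^ 2 + b ^ 2 + b = X at key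
      omega
  · refine ⟨hm, ?_⟩
    rcases Nat.even_or_odd n with ⟨b, hb⟩ | hn
    · exfalso
      obtain ⟨a, ha⟩ := hm
      subst ha hb
      have key : 4 * (a ^ 2 + a + b ^ 2) + 1 = 4 * k + 2 := by rw [← h]; ring
      generalize a ^ 2 + a + b ^ 2 = X at key
      omega
    · exact hn

private lemma both_even (m n k : ℕ) (h : m ^ 2 + n ^ 2 = 4 * k) :
    Even m ∧ Even n := by
  rcases Nat.even_or_odd m with hm | ⟨a, ha⟩
  · refine ⟨hm, ?_⟩
    rcases Nat.even_or_odd n with hn | ⟨b, hb⟩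
    · exact hn
    · exfalso
      obtain ⟨a, ha⟩ := hm
      subst ha hb
      have key : 4 * (a ^ 2 + b ^ 2 + b) + 1 = 4 * k := by rw [← h]; ring
      generalize a ^ 2 + b ^ 2 + b = X at key
      omega
  · exfalso
    rcases Nat.even_or_odd n with ⟨b, hb⟩ | ⟨b, hb⟩
    · subst ha hb
      have key : 4 * (a ^ 2 + a + b ^ 2) + 1 = 4 * k := by rw [← h]; ring
      generalize a ^ 2 + a + b ^ 2 = X at key
      omega
    · subst ha hb
      have key : 4 * (a ^ 2 + a + b ^ 2 + b) + 2 = 4 * k := by rw [← h]; ring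
      generalize a ^ 2 + a + b ^ 2 + b = X at key
      omega

private lemma key_lemma : ∀ s ℓ m n : ℕ, m ^ 2 + n ^ 2 = 2 * 4 ^ s * (2 * ℓ + 1) →
    ∃ a b : ℕ, m = 2 ^ s * a ∧ n = 2 ^ s * b ∧ Odd a ∧ Odd b := by
  intro s
  induction s with
  | zero =>
    intro ℓ m n h
    have h' : m ^ 2 + n ^ 2 = 4 * ℓ + 2 := by rw [h]; ring
    obtain ⟨hm, hn⟩ := both_odd m n ℓ h'
    exact ⟨m, n, by simp, by simp, hm, hn⟩
  | succ s ih =>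
    intro ℓ m n h
    have h' : m ^ 2 + n ^ 2 = 4 * (2 * 4 ^ s * (2 * ℓ + 1)) := by rw [h]; ring
    obtain ⟨⟨a, ha⟩, ⟨b, hb⟩⟩ := both_even m n _ h'
    subst ha hb
    have h2 : a ^ 2 + b ^ 2 = 2 * 4 ^ s * (2 * ℓ + 1) := by nlinarith [h']
    obtain ⟨a', b', ha', hb', hoa, hob⟩ := ih ℓ a b h2
    exact ⟨a', b', by rw [ha']; ring, by rw [hb']; ring, hoa, hob⟩

private lemma cos_odd (a : ℕ) (ha : Odd a) : Real.cos ((a : ℝ) * π) = -1 := by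
  obtain ⟨c, hc⟩ := ha
  subst hc
  push_cast
  have : ((2 * (c : ℝ) + 1)) * π = (c : ℤ) * (2 * π) + π := by push_cast; ring
  rw [this, Real.cos_int_mul_two_pi_add_pi]

theorem stmt7 (s ℓ : ℕ) (lam : ℕ) (hlam : lam = 2 * 4 ^ s * (2 * ℓ + 1))
    (m n : ℕ) (h : m ^ 2 + n ^ 2 = lam) :
    Real.cos ((m : ℝ) / 2 ^ s * π) + Real.cos ((n : ℝ) / 2 ^ s * π) = -2 := by
  subst hlam
  obtain ⟨a, b, ha, hb, hoa, hob⟩ := key_lemma s ℓ m n h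
  subst ha hb
  have h2 : (2 : ℝ) ^ s ≠ 0 := by positivity
  have e1 : ((2 ^ s * a : ℕ) : ℝ) / 2 ^ s = (a : ℝ) := by push_cast; field_simp
  have e2 : ((2 ^ s * b : ℕ) : ℝ) / 2 ^ s = (b : ℝ) := by push_cast; field_simp
  rw [e1, e2, cos_odd a hoa, cos_odd b hob]
  norm_num
end

section
/- Let λ be a positive integer and let u(x) = Σ_{(m,n): m²+n²=λ, m,n ∈ ℕ} a_{m,n}(cos(mx) + cos(nx)) be a finite sum with real coefficients a_{m,n} = a_{n,m}. Then there exists a point x₀ ∈ [0, 2π] with u(x₀) ≤ 0. -/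
open Real

lemma sq_mod4 (m : ℕ) : m ^ 2 % 4 = m % 2 := by
  rcases Nat.even_or_odd m with ⟨k, hk⟩ | ⟨k, hk⟩ <;> subst hk
  · have h : (k + k) ^ 2 = 4 * k ^ 2 := by ring
    rw [h]
    simp [Nat.mul_mod_right]
    omega
  · have h : (2 * k + 1) ^ 2 = 4 * (k ^ 2 + k) + 1 := by ring
    rw [h]
    omega

lemma cos_m_pi (m : ℕ) : Real.cos (m * π) = (-1 : ℝ) ^ m := by
  simpa using Real.cos_nat_mul_pi_sub 0 m

lemma key : ∀ lam : ℕ, 0 < lam →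
    ∃ t ∈ Set.Icc (0 : ℝ) π, ∃ c ≤ (0 : ℝ),
      ∀ m n : ℕ, m ^ 2 + n ^ 2 = lam → Real.cos (m * t) + Real.cos (n * t) = c := by
  intro lam
  induction lam using Nat.strong_induction_on with
  | _ lam ih =>
  intro hl
  by_cases h4 : lam % 4 = 0
  · -- lam = 4 * mu
    set mu := lam / 4 with hmu
    have hlam4 : lam = 4 * mu := by omega
    have hmupos : 0 < mu := by omega
    have hmult : mu < lam := by omega
    obtain ⟨t, ht, c, hc, H⟩ := ih mu hmult hmupos
    refine ⟨t / 2, ⟨by linarith [ht.1], by linarith [ht.1, ht.2]⟩, c, hc, ?_⟩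
    intro m n hmn
    have hm2 : m % 2 = 0 ∧ n % 2 = 0 := by
      have h1 := sq_mod4 m
      have h2 := sq_mod4 n
      have h3 : (m ^ 2 + n ^ 2) % 4 = (m ^ 2 % 4 + n ^ 2 % 4) % 4 := Nat.add_mod _ _ _
      omega
    obtain ⟨k, hk⟩ : ∃ k, m = 2 * k := ⟨m / 2, by omega⟩
    obtain ⟨l, hll⟩ : ∃ l, n = 2 * l := ⟨n / 2, by omega⟩
    subst hk hll
    have hkl : k ^ 2 + l ^ 2 = mu := by
      have hexp : (2 * k) ^ 2 + (2 * l) ^ 2 = 4 * (k ^ 2 + l ^ 2) := by ring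
      rw [hexp, hlam4] at hmn
      exact Nat.eq_of_mul_eq_mul_left (by norm_num) hmn
    have e1 : ((2 * k : ℕ) : ℝ) * (t / 2) = (k : ℝ) * t := by push_cast; ring
    have e2 : ((2 * l : ℕ) : ℝ) * (t / 2) = (l : ℝ) * t := by push_cast; ring
    rw [e1, e2]
    exact H k l hkl
  · refine ⟨π, ⟨Real.pi_nonneg, le_refl _⟩, ?_⟩
    by_cases h2 : lam % 2 = 1
    · refine ⟨0, le_refl _, ?_⟩
      intro m n hmn
      have h1 := sq_mod4 m
      have h2' := sq_mod4 n
      have h3 : (m ^ 2 + n ^ 2) % 4 = (m ^ 2 % 4 + n ^ 2 % 4) % 4 := Nat.add_mod _ _ _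
      have hpar : (m % 2 = 0 ∧ n % 2 = 1) ∨ (m % 2 = 1 ∧ n % 2 = 0) := by omega
      rw [cos_m_pi, cos_m_pi]
      rcases hpar with ⟨he, ho⟩ | ⟨ho, he⟩
      · rw [(Nat.even_iff.mpr he).neg_one_pow, (Nat.odd_iff.mpr ho).neg_one_pow]; ring
      · rw [(Nat.even_iff.mpr he).neg_one_pow, (Nat.odd_iff.mpr ho).neg_one_pow]; ring
    · -- lam % 4 = 2 : both odd
      refine ⟨-2, by norm_num, ?_⟩
      intro m n hmn
      have h1 := sq_mod4 m
      have h2' := sq_mod4 n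
      have h3 : (m ^ 2 + n ^ 2) % 4 = (m ^ 2 % 4 + n ^ 2 % 4) % 4 := Nat.add_mod _ _ _
      have hpar : m % 2 = 1 ∧ n % 2 = 1 := by omega
      rw [cos_m_pi, cos_m_pi, (Nat.odd_iff.mpr hpar.1).neg_one_pow,
        (Nat.odd_iff.mpr hpar.2).neg_one_pow]
      ring

theorem stmt8 (lam : ℕ) (hlam : 0 < lam) (a : ℕ → ℕ → ℝ)
    (hsym : ∀ m n, a m n = a n m) :
    ∃ x₀ ∈ Set.Icc (0 : ℝ) (2 * π),
      ∑ p ∈ (Finset.range (lam + 1) ×ˢ Finset.range (lam + 1)).filter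
          (fun p => p.1 ^ 2 + p.2 ^ 2 = lam),
        a p.1 p.2 * (Real.cos (p.1 * x₀) + Real.cos (p.2 * x₀)) ≤ 0 := by
  obtain ⟨t, ht, c, hc, H⟩ := key lam hlam
  set F := (Finset.range (lam + 1) ×ˢ Finset.range (lam + 1)).filter
      (fun p => p.1 ^ 2 + p.2 ^ 2 = lam) with hF
  set S : ℝ := ∑ p ∈ F, a p.1 p.2 with hS
  by_cases hSpos : 0 ≤ S
  · refine ⟨t, ⟨ht.1, le_trans ht.2 (by linarith [Real.pi_pos])⟩, ?_⟩
    have hsum : ∑ p ∈ F, a p.1 p.2 * (Real.cos (p.1 * t) + Real.cos (p.2 * t))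
        = S * c := by
      rw [hS, Finset.sum_mul]
      refine Finset.sum_congr rfl fun p hp => ?_
      rw [H p.1 p.2 (Finset.mem_filter.mp hp).2]
    rw [hsum]
    exact mul_nonpos_of_nonneg_of_nonpos hSpos hc
  · refine ⟨0, ⟨le_refl _, by linarith [Real.pi_pos]⟩, ?_⟩
    have hsum : ∑ p ∈ F, a p.1 p.2 * (Real.cos (p.1 * 0) + Real.cos (p.2 * 0))
        = S * 2 := by
      rw [hS, Finset.sum_mul]
      refine Finset.sum_congr rfl fun p hp => ?_
      rw [mul_zero, mul_zero, Real.cos_zero]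
      ring
    rw [hsum]
    nlinarith [lt_of_not_ge hSpos]
end

section
/- Let λ > 0 and let I(λ) = {(m,n) ∈ ℕ₀² : π²(m²/c² + n²/d²) = λ}. Suppose u(x,y) = Σ_{(m,n) ∈ I(λ)} a_{m,n} cos(mπx/c) cos(nπy/d) satisfies u > 0 on the entire boundary of (0,c)×(0,d). Then there exist positive integers m₀, n₀ with (m₀,0) ∈ I(λ) and (0,n₀) ∈ I(λ), i.e., m₀²π²/c² = n₀²π²/d² = λ. -/
open Real

lemma cos_int_zero (d : ℝ) (hd : 0 < d) (n : ℕ) (hn : n ≠ 0) :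
    ∫ y in (0:ℝ)..d, Real.cos ((n : ℝ) * π * y / d) = 0 := by
  have hk : ((n : ℝ) * π / d) ≠ 0 := by
    have : (0:ℝ) < (n:ℝ) * π / d := by
      apply div_pos (mul_pos (by exact_mod_cast Nat.pos_of_ne_zero hn) Real.pi_pos) hd
    exact ne_of_gt this
  have heq : ∀ y : ℝ, (n : ℝ) * π * y / d = ((n : ℝ) * π / d) * y := by
    intro y; ring
  simp_rw [heq]
  rw [intervalIntegral.integral_comp_mul_left (f := Real.cos) hk]
  have h1 : (n : ℝ) * π / d * d = (n : ℝ) * π := by field_simp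
  rw [mul_zero, h1, integral_cos, Real.sin_zero, sub_zero, Real.sin_nat_mul_pi, smul_eq_mul,
    mul_zero]

lemma helper (d : ℝ) (hd : 0 < d) (S : Finset (ℕ × ℕ)) (b : ℕ × ℕ → ℝ) (k : ℕ × ℕ → ℕ)
    (hS : ∀ p ∈ S, k p ≠ 0)
    (hpos : ∀ y ∈ Set.Icc (0:ℝ) d, 0 < ∑ p ∈ S, b p * Real.cos ((k p : ℝ) * π * y / d)) :
    False := by
  set f : ℝ → ℝ := fun y => ∑ p ∈ S, b p * Real.cos ((k p : ℝ) * π * y / d) with hf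
  have hcont : Continuous f := by
    apply continuous_finset_sum
    intro p _
    fun_prop
  have h1 : 0 < ∫ y in (0:ℝ)..d, f y := by
    apply intervalIntegral.intervalIntegral_pos_of_pos_on
      (hcont.intervalIntegrable _ _)
      (fun y hy => hpos y ⟨le_of_lt hy.1, le_of_lt hy.2⟩) hd
  have h2 : ∫ y in (0:ℝ)..d, f y = 0 := by
    simp only [hf]
    rw [intervalIntegral.integral_finset_sum]
    · apply Finset.sum_eq_zero
      intro p hp
      rw [intervalIntegral.integral_const_mul, cos_int_zero d hd (k p) (hS p hp), mul_zero]
    · intro p _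
      apply Continuous.intervalIntegrable
      fun_prop
  linarith

theorem stmt13 (c d : ℝ) (hc : 0 < c) (hd : 0 < d) (lam : ℝ) (hlam : 0 < lam)
    (a : ℕ → ℕ → ℝ) (I : Finset (ℕ × ℕ))
    (hI : ∀ p : ℕ × ℕ, p ∈ I ↔
      π ^ 2 * ((p.1 : ℝ) ^ 2 / c ^ 2 + (p.2 : ℝ) ^ 2 / d ^ 2) = lam)
    (u : ℝ → ℝ → ℝ)
    (hu : ∀ x y, u x y =
      ∑ p ∈ I, a p.1 p.2 * Real.cos (p.1 * π * x / c) * Real.cos (p.2 * π * y / d))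
    (hpos : ∀ x y, x ∈ Set.Icc (0 : ℝ) c → y ∈ Set.Icc (0 : ℝ) d →
      (x = 0 ∨ x = c ∨ y = 0 ∨ y = d) → 0 < u x y) :
    ∃ m₀ n₀ : ℕ, 0 < m₀ ∧ 0 < n₀ ∧ (m₀, 0) ∈ I ∧ (0, n₀) ∈ I ∧
      (m₀ : ℝ) ^ 2 * π ^ 2 / c ^ 2 = lam ∧ (n₀ : ℝ) ^ 2 * π ^ 2 / d ^ 2 = lam := by
  have hpi := Real.pi_pos
  -- existence of m₀ with (m₀, 0) ∈ I
  have hm : ∃ m₀ : ℕ, m₀ ≠ 0 ∧ (m₀, 0) ∈ I := by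
    by_contra h
    push_neg at h
    apply helper d hd I (fun p => a p.1 p.2) (fun p => p.2)
    · intro p hp hp2
      have hm1 : p.1 ≠ 0 := by
        intro hp1
        have := (hI p).mp hp
        rw [hp1, hp2] at this
        simp at this
        linarith
      have : (p.1, 0) ∈ I := by
        rw [hI]
        have := (hI p).mp hp
        rw [hp2] at this
        simpa using this
      exact h p.1 hm1 this
    · intro y hy
      have := hpos 0 y ⟨le_refl 0, le_of_lt hc⟩ hy (Or.inl rfl)
      rw [hu] at this
      convert this using 2 with p
      simp [mul_comm]
  have hn : ∃ n₀ : ℕ, n₀ ≠ 0 ∧ (0, n₀) ∈ I := by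
    by_contra h
    push_neg at h
    apply helper c hc I (fun p => a p.1 p.2) (fun p => p.1)
    · intro p hp hp1
      have hm2 : p.2 ≠ 0 := by
        intro hp2
        have := (hI p).mp hp
        rw [hp1, hp2] at this
        simp at this
        linarith
      have : (0, p.2) ∈ I := by
        rw [hI]
        have := (hI p).mp hp
        rw [hp1] at this
        simpa using this
      exact h p.2 hm2 this
    · intro x hx
      have := hpos x 0 hx ⟨le_refl 0, le_of_lt hd⟩ (Or.inr (Or.inr (Or.inl rfl)))
      rw [hu] at this
      convert this using 2 with p
      simp [mul_comm]
  obtain ⟨m₀, hm0, hmI⟩ := hm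
  obtain ⟨n₀, hn0, hnI⟩ := hn
  refine ⟨m₀, n₀, Nat.pos_of_ne_zero hm0, Nat.pos_of_ne_zero hn0, hmI, hnI, ?_, ?_⟩
  · have := (hI (m₀, 0)).mp hmI
    simp at this
    rw [← this]; ring
  · have := (hI (0, n₀)).mp hnI
    simp at this
    rw [← this]; ring
end
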